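/- arXiv:0908.3404 — 3 statements merged into one kernel-verified Lean document; each statement's English description precedes it below -/
import Mathlib

section
/- The convex polytope Q_P is a Fano polytope: Q_P has dimension d and the origin of ℝ^d is the unique integer point belonging to the interior of Q_P. -/
open scoped Classical

/-- The poset `P̂ = P ∪ {0̂, 1̂}`: `none` is the minimum `y₀ = 0̂`,
`some none` is the maximum `y_{d+1} = 1̂`, and `some (some i)` is `y_{i+1} ∈ P`. -/
abbrev HatP (d : ℕ) := Option (Option (Fin d))

def hatBot (d : ℕ) : HatP d := none

def hatTop (d : ℕ) : HatP d := some none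

/-- The order of `P̂` induced by a partial order `P` on `Fin d`. -/
def hatLE {d : ℕ} (P : PartialOrder (Fin d)) : HatP d → HatP d → Prop
  | none, _ => True
  | some _, none => False
  | some none, some none => True
  | some none, some (some _) => False
  | some (some _), some none => True
  | some (some a), some (some b) => P.le a b

def hatLT {d : ℕ} (P : PartialOrder (Fin d)) (a b : HatP d) : Prop :=
  hatLE P a b ∧ a ≠ b

/-- `b` covers `a` in `P̂`. -/
def IsCover {d : ℕ} (P : PartialOrder (Fin d)) (a b : HatP d) : Prop :=
  hatLT P a b ∧ ∀ z, ¬ (hatLT P a z ∧ hatLT P z b)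

/-- `{a, b}` is an edge of the Hasse diagram of `P̂` (undirected). -/
def IsEdge {d : ℕ} (P : PartialOrder (Fin d)) (a b : HatP d) : Prop :=
  IsCover P a b ∨ IsCover P b a

/-- `chi y = e_i` if `y = y_i ∈ P`, and `0` if `y ∈ {0̂, 1̂}`. -/
def chi {d : ℕ} : HatP d → (Fin d → ℝ)
  | some (some i) => fun k => if k = i then 1 else 0
  | _ => 0

/-- `ρ(e)` for the edge `e = {a, b}` with `a < b`. -/
def rho {d : ℕ} (a b : HatP d) : Fin d → ℝ := chi a - chi b

/-- `ρ(e)` for an unordered edge `{a, b}`. -/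
noncomputable def rhoE {d : ℕ} (P : PartialOrder (Fin d)) (a b : HatP d) : Fin d → ℝ :=
  if hatLT P a b then rho a b else rho b a

/-- The set `{ρ(e) : e an edge of P̂}`. -/
def edgeVecs {d : ℕ} (P : PartialOrder (Fin d)) : Set (Fin d → ℝ) :=
  {v | ∃ a b, IsCover P a b ∧ v = rho a b}

/-- The polytope `Q_P`, convex hull of `{ρ(e) : e an edge of P̂}`. -/
def QPoly {d : ℕ} (P : PartialOrder (Fin d)) : Set (Fin d → ℝ) :=
  convexHull ℝ (edgeVecs P)

/-- A point of `ℝ^d` all of whose coordinates are integers. -/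
def IsIntegralPt {d : ℕ} (x : Fin d → ℝ) : Prop := ∀ k, ∃ z : ℤ, x k = (z : ℝ)

/-- A facet of a polytope: an exposed face of dimension `d - 1`. -/
def IsFacet {d : ℕ} (Q F : Set (Fin d → ℝ)) : Prop :=
  IsExposed ℝ Q F ∧ Module.finrank ℝ ↥(vectorSpan ℝ F) = d - 1

/-- A cycle `(c 0, c 1, …, c m)` in (the Hasse diagram of) `P̂`;
indices are cyclic in `Fin (m+1)`. -/
def IsCycle {d : ℕ} (P : PartialOrder (Fin d)) {m : ℕ} (c : Fin (m + 1) → HatP d) : Prop :=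
  2 ≤ m ∧ Function.Injective c ∧ ∀ j, IsEdge P (c j) (c (j + 1))

/-- A cycle is special if it has as many ascending steps as descending steps. -/
def CycleSpecial {d : ℕ} (P : PartialOrder (Fin d)) {m : ℕ} (c : Fin (m + 1) → HatP d) : Prop :=
  Nat.card {j : Fin (m + 1) // hatLT P (c j) (c (j + 1))} =
    Nat.card {j : Fin (m + 1) // hatLT P (c (j + 1)) (c j)}

/-- A very special cycle: special, and not containing both `0̂` and `1̂`. -/
def VerySpecialCycle {d : ℕ} (P : PartialOrder (Fin d)) {m : ℕ}
    (c : Fin (m + 1) → HatP d) : Prop :=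
  IsCycle P c ∧ CycleSpecial P c ∧
    ¬ (hatBot d ∈ Set.range c ∧ hatTop d ∈ Set.range c)

/-- A path `(c 0, c 1, …, c m)` in (the Hasse diagram of) `P̂`. -/
def IsPath {d : ℕ} (P : PartialOrder (Fin d)) {m : ℕ} (c : Fin (m + 1) → HatP d) : Prop :=
  Function.Injective c ∧ ∀ j : Fin m, IsEdge P (c j.castSucc) (c j.succ)

/-- A path is special if it has as many ascending steps as descending steps. -/
def PathSpecial {d : ℕ} (P : PartialOrder (Fin d)) {m : ℕ} (c : Fin (m + 1) → HatP d) : Prop :=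
  Nat.card {j : Fin m // hatLT P (c j.castSucc) (c j.succ)} =
    Nat.card {j : Fin m // hatLT P (c j.succ) (c j.castSucc)}

/-- `μ` is the level function of a special cycle `c`. -/
def IsMuCycle {d : ℕ} (P : PartialOrder (Fin d)) {m : ℕ} (c : Fin (m + 1) → HatP d)
    (μ : Fin (m + 1) → ℕ) : Prop :=
  (∀ j, (hatLT P (c j) (c (j + 1)) → μ (j + 1) = μ j + 1) ∧
        (hatLT P (c (j + 1)) (c j) → μ j = μ (j + 1) + 1)) ∧
  ∃ j, μ j = 0

/-- `μ` is the level function of a special path `c`. -/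
def IsMuPath {d : ℕ} (P : PartialOrder (Fin d)) {m : ℕ} (c : Fin (m + 1) → HatP d)
    (μ : Fin (m + 1) → ℕ) : Prop :=
  (∀ j : Fin m, (hatLT P (c j.castSucc) (c j.succ) → μ j.succ = μ j.castSucc + 1) ∧
        (hatLT P (c j.succ) (c j.castSucc) → μ j.castSucc = μ j.succ + 1)) ∧
  ∃ j, μ j = 0

/-- The distance `dist_{P̂}(y, z)`: the smallest `s` for which there is a saturated
chain `y = z_0 < z_1 < ⋯ < z_s = z` in `P̂`. -/
noncomputable def hatDist {d : ℕ} (P : PartialOrder (Fin d)) (y z : HatP d) : ℕ :=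
  sInf {s | ∃ c : Fin (s + 1) → HatP d, c 0 = y ∧ c (Fin.last s) = z ∧
    ∀ j : Fin s, IsCover P (c j.castSucc) (c j.succ)}

/-- `P̂` has a very special cycle satisfying the inequalities (1) and (2). -/
def HasBadCycle {d : ℕ} (P : PartialOrder (Fin d)) : Prop :=
  ∃ (m : ℕ) (c : Fin (m + 1) → HatP d) (μ : Fin (m + 1) → ℕ),
    VerySpecialCycle P c ∧ IsMuCycle P c μ ∧
    (∀ a b, hatLT P (c b) (c a) →
      (μ a : ℤ) - (μ b : ℤ) ≤ (hatDist P (c b) (c a) : ℤ)) ∧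
    (∀ a b, (μ a : ℤ) - (μ b : ℤ) ≤
      (hatDist P (hatBot d) (c a) : ℤ) + (hatDist P (c b) (hatTop d) : ℤ))

/-- `P̂` has a special path from `0̂` to `1̂` satisfying the inequality (3). -/
def HasBadPath {d : ℕ} (P : PartialOrder (Fin d)) : Prop :=
  ∃ (m : ℕ) (c : Fin (m + 1) → HatP d) (μ : Fin (m + 1) → ℕ),
    IsPath P c ∧ PathSpecial P c ∧ c 0 = hatBot d ∧ c (Fin.last m) = hatTop d ∧
    IsMuPath P c μ ∧
    (∀ a b, hatLT P (c b) (c a) →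
      (μ a : ℤ) - (μ b : ℤ) ≤ (hatDist P (c b) (c a) : ℤ))

/-- A polytope is simplicial (ℚ-factorial) if each of its proper faces is a simplex. -/
def SimplicialPoly {d : ℕ} (Q : Set (Fin d → ℝ)) : Prop :=
  ∀ F : Set (Fin d → ℝ), IsExposed ℝ Q F → F ≠ Q →
    AffineIndependent ℝ (fun p : Set.extremePoints ℝ F => (p : Fin d → ℝ))

/-- A polytope is smooth if the vertices of each facet form a ℤ-basis of `ℤ^d`. -/
def SmoothPoly {d : ℕ} (Q : Set (Fin d → ℝ)) : Prop :=
  ∀ F : Set (Fin d → ℝ), IsFacet Q F →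
    ∃ b : Module.Basis (Fin d) ℤ (Fin d → ℤ),
      (Set.range fun i => fun k => ((b i k : ℤ) : ℝ)) = Set.extremePoints ℝ F

/-- A maximal chain `0̂ = c 0 < c 1 < ⋯ < c m = 1̂` of `P̂` (of length `m`). -/
def IsMaxChainHat {d : ℕ} (P : PartialOrder (Fin d)) {m : ℕ} (c : Fin (m + 1) → HatP d) : Prop :=
  c 0 = hatBot d ∧ c (Fin.last m) = hatTop d ∧
    ∀ j : Fin m, IsCover P (c j.castSucc) (c j.succ)

/-- `P` is pure: all maximal chains of `P̂` have the same length. -/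
def PureP {d : ℕ} (P : PartialOrder (Fin d)) : Prop :=
  ∀ (m m' : ℕ) (c : Fin (m + 1) → HatP d) (c' : Fin (m' + 1) → HatP d),
    IsMaxChainHat P c → IsMaxChainHat P c' → m = m'
section basic
variable {d : ℕ} (P : PartialOrder (Fin d))

lemma hatLE_top (a : HatP d) : hatLE P a (hatTop d) := by
  rcases a with _ | (_ | a) <;> trivial

lemma hatBot_LE (a : HatP d) : hatLE P (hatBot d) a := trivial

lemma hatLE_trans {a b c : HatP d} (h1 : hatLE P a b) (h2 : hatLE P b c) : hatLE P a c := by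
  rcases a with _ | (_ | a) <;> rcases b with _ | (_ | b) <;> rcases c with _ | (_ | c) <;>
    simp_all [hatLE] <;> exact P.le_trans _ _ _ h1 h2

lemma hatLE_antisymm {a b : HatP d} (h1 : hatLE P a b) (h2 : hatLE P b a) : a = b := by
  rcases a with _ | (_ | a) <;> rcases b with _ | (_ | b) <;> simp_all [hatLE]
  exact P.le_antisymm _ _ h1 h2

lemma hatLT_trans {a b c : HatP d} (h1 : hatLT P a b) (h2 : hatLT P b c) : hatLT P a c := by
  refine ⟨hatLE_trans P h1.1 h2.1, fun h => ?_⟩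
  subst h
  exact h2.2 (hatLE_antisymm P h2.1 h1.1)

lemma hatLT_irrefl (a : HatP d) : ¬ hatLT P a a := fun h => h.2 rfl

/-- the set of elements strictly between a and b -/
noncomputable def between (a b : HatP d) : Finset (HatP d) :=
  Finset.univ.filter (fun z => hatLT P a z ∧ hatLT P z b)

lemma exists_cover_up : ∀ (N : ℕ) (a b : HatP d), (between P a b).card ≤ N →
    hatLT P a b → ∃ b', IsCover P a b' := by
  intro N
  induction N with
  | zero =>
    intro a b hc hab
    refine ⟨b, hab, fun z hz => ?_⟩
    have : z ∈ between P a b := by simp [between, hz.1, hz.2]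
    simp [Finset.card_eq_zero.mp (Nat.le_zero.mp hc)] at this
  | succ N ih =>
    intro a b hc hab
    by_cases hE : between P a b = ∅
    · refine ⟨b, hab, fun z hz => ?_⟩
      have : z ∈ between P a b := by simp [between, hz.1, hz.2]
      simp [hE] at this
    · obtain ⟨z, hz⟩ := Finset.nonempty_iff_ne_empty.mpr hE
      simp only [between, Finset.mem_filter, Finset.mem_univ, true_and] at hz
      have hsub : between P a z ⊆ between P a b := by
        intro w hw
        simp only [between, Finset.mem_filter, Finset.mem_univ, true_and] at hw ⊢
        exact ⟨hw.1, hatLT_trans P hw.2 hz.2⟩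
      have hzm : z ∈ between P a b := by simp [between, hz.1, hz.2]
      have hzn : z ∉ between P a z := by
        simp [between, hatLT_irrefl]
      have : (between P a z).card < (between P a b).card :=
        Finset.card_lt_card (Finset.ssubset_iff_of_subset hsub |>.mpr ⟨z, hzm, hzn⟩)
      exact ih a z (by omega) hz.1

lemma exists_cover_down : ∀ (N : ℕ) (a b : HatP d), (between P a b).card ≤ N →
    hatLT P a b → ∃ a', IsCover P a' b := by
  intro N
  induction N with
  | zero =>
    intro a b hc hab
    refine ⟨a, hab, fun z hz => ?_⟩
    have : z ∈ between P a b := by simp [between, hz.1, hz.2]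
    simp [Finset.card_eq_zero.mp (Nat.le_zero.mp hc)] at this
  | succ N ih =>
    intro a b hc hab
    by_cases hE : between P a b = ∅
    · refine ⟨a, hab, fun z hz => ?_⟩
      have : z ∈ between P a b := by simp [between, hz.1, hz.2]
      simp [hE] at this
    · obtain ⟨z, hz⟩ := Finset.nonempty_iff_ne_empty.mpr hE
      simp only [between, Finset.mem_filter, Finset.mem_univ, true_and] at hz
      have hsub : between P z b ⊆ between P a b := by
        intro w hw
        simp only [between, Finset.mem_filter, Finset.mem_univ, true_and] at hw ⊢
        exact ⟨hatLT_trans P hz.1 hw.1, hw.2⟩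
      have hzm : z ∈ between P a b := by simp [between, hz.1, hz.2]
      have hzn : z ∉ between P z b := by
        simp [between, hatLT_irrefl]
      have : (between P z b).card < (between P a b).card :=
        Finset.card_lt_card (Finset.ssubset_iff_of_subset hsub |>.mpr ⟨z, hzm, hzn⟩)
      exact ih z b (by omega) hz.2

end basic

section chainlemmas
variable {d : ℕ} (P : PartialOrder (Fin d))

noncomputable def above (a : HatP d) : Finset (HatP d) :=
  Finset.univ.filter (fun z => hatLT P a z)
noncomputable def below (a : HatP d) : Finset (HatP d) :=
  Finset.univ.filter (fun z => hatLT P z a)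

lemma rho_mem_Q {a b : HatP d} (h : IsCover P a b) : rho a b ∈ QPoly P :=
  subset_convexHull ℝ _ ⟨a, b, h, rfl⟩

lemma chi_top : chi (hatTop d) = 0 := rfl
lemma chi_bot : chi (hatBot d) = 0 := rfl

lemma convexQ : Convex ℝ (QPoly P) := convex_convexHull ℝ _

lemma chain_up : ∀ (N : ℕ) (a : HatP d), (above P a).card ≤ N → hatLT P a (hatTop d) →
    ∃ n : ℕ, 0 < n ∧ n ≤ (above P a).card ∧ ((n : ℝ))⁻¹ • chi a ∈ QPoly P := by
  intro N
  induction N with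
  | zero =>
    intro a hc ha
    exfalso
    have : hatTop d ∈ above P a := by simp [above, ha]
    simp [Finset.card_eq_zero.mp (Nat.le_zero.mp hc)] at this
  | succ N ih =>
    intro a hc ha
    obtain ⟨b, hb⟩ := exists_cover_up P (between P a (hatTop d)).card a (hatTop d) le_rfl ha
    have hbmem : b ∈ above P a := by simp [above, hb.1]
    by_cases htop : b = hatTop d
    · subst htop
      refine ⟨1, one_pos, by
        have := Finset.card_pos.mpr ⟨_, hbmem⟩; omega, ?_⟩
      have : rho a (hatTop d) = chi a := by
        simp [rho, chi_top]
      rw [Nat.cast_one, inv_one, one_smul, ← this]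
      exact rho_mem_Q P hb
    · have hblt : hatLT P b (hatTop d) := ⟨hatLE_top P b, htop⟩
      have hsub : above P b ⊆ above P a := by
        intro w hw
        simp only [above, Finset.mem_filter, Finset.mem_univ, true_and] at hw ⊢
        exact hatLT_trans P hb.1 hw
      have hbn : b ∉ above P b := by simp [above, hatLT_irrefl]
      have hlt : (above P b).card < (above P a).card :=
        Finset.card_lt_card (Finset.ssubset_iff_of_subset hsub |>.mpr ⟨b, hbmem, hbn⟩)
      obtain ⟨n, hn0, hnle, hmem⟩ := ih b (by omega) hblt
      refine ⟨n + 1, by omega, by omega, ?_⟩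
      have key : ((n + 1 : ℕ) : ℝ)⁻¹ • chi a =
          (((n:ℝ) + 1))⁻¹ • rho a b + ((n:ℝ) / ((n:ℝ) + 1)) • (((n:ℝ))⁻¹ • chi b) := by
        have hn : (n : ℝ) ≠ 0 := Nat.cast_ne_zero.mpr (by omega)
        have hn1 : (n : ℝ) + 1 ≠ 0 := by positivity
        rw [rho, smul_sub, smul_smul]
        have : (n:ℝ) / ((n:ℝ) + 1) * ((n:ℝ))⁻¹ = ((n:ℝ) + 1)⁻¹ := by
          field_simp
        rw [this]
        push_cast
        module
      rw [key]
      exact convexQ P (rho_mem_Q P hb) hmem (by positivity)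
        (by positivity) (by field_simp; ring)

lemma chain_down : ∀ (N : ℕ) (a : HatP d), (below P a).card ≤ N → hatLT P (hatBot d) a →
    ∃ n : ℕ, 0 < n ∧ n ≤ (below P a).card ∧ ((n : ℝ))⁻¹ • (-chi a) ∈ QPoly P := by
  intro N
  induction N with
  | zero =>
    intro a hc ha
    exfalso
    have : hatBot d ∈ below P a := by simp [below, ha]
    simp [Finset.card_eq_zero.mp (Nat.le_zero.mp hc)] at this
  | succ N ih =>
    intro a hc ha
    obtain ⟨b, hb⟩ := exists_cover_down P (between P (hatBot d) a).card (hatBot d) a le_rfl ha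
    have hbmem : b ∈ below P a := by simp [below, hb.1]
    by_cases hbot : b = hatBot d
    · subst hbot
      refine ⟨1, one_pos, by
        have := Finset.card_pos.mpr ⟨_, hbmem⟩; omega, ?_⟩
      have : rho (hatBot d) a = -chi a := by
        simp [rho, chi_bot]
      rw [Nat.cast_one, inv_one, one_smul, ← this]
      exact rho_mem_Q P hb
    · have hblt : hatLT P (hatBot d) b := ⟨hatBot_LE P b, fun h => hbot h.symm⟩
      have hsub : below P b ⊆ below P a := by
        intro w hw
        simp only [below, Finset.mem_filter, Finset.mem_univ, true_and] at hw ⊢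
        exact hatLT_trans P hw hb.1
      have hbn : b ∉ below P b := by simp [below, hatLT_irrefl]
      have hlt : (below P b).card < (below P a).card :=
        Finset.card_lt_card (Finset.ssubset_iff_of_subset hsub |>.mpr ⟨b, hbmem, hbn⟩)
      obtain ⟨n, hn0, hnle, hmem⟩ := ih b (by omega) hblt
      refine ⟨n + 1, by omega, by omega, ?_⟩
      have key : ((n + 1 : ℕ) : ℝ)⁻¹ • (-chi a) =
          (((n:ℝ) + 1))⁻¹ • rho b a + ((n:ℝ) / ((n:ℝ) + 1)) • (((n:ℝ))⁻¹ • (-chi b)) := by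
        have hn : (n : ℝ) ≠ 0 := Nat.cast_ne_zero.mpr (by omega)
        have hn1 : (n : ℝ) + 1 ≠ 0 := by positivity
        rw [rho, smul_sub, smul_smul]
        have : (n:ℝ) / ((n:ℝ) + 1) * ((n:ℝ))⁻¹ = ((n:ℝ) + 1)⁻¹ := by
          field_simp
        rw [this]
        push_cast
        module
      rw [key]
      exact convexQ P (rho_mem_Q P hb) hmem (by positivity)
        (by positivity) (by field_simp; ring)

end chainlemmas
section final
variable {d : ℕ} (P : PartialOrder (Fin d))

lemma chi01 (y : HatP d) (k : Fin d) : chi y k = 0 ∨ chi y k = 1 := by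
  rcases y with _ | (_ | i)
  · left; rfl
  · left; rfl
  · by_cases h : k = i <;> simp [chi, h]

lemma Q_sub_ball : QPoly P ⊆ Metric.closedBall (0 : Fin d → ℝ) 1 := by
  apply convexHull_min _ (convex_closedBall _ _)
  rintro v ⟨a, b, _, rfl⟩
  rw [Metric.mem_closedBall, dist_zero_right]
  rw [pi_norm_le_iff_of_nonneg zero_le_one]
  intro k
  have ha := chi01 a k
  have hb := chi01 b k
  show ‖chi a k - chi b k‖ ≤ 1
  rw [Real.norm_eq_abs]
  rcases ha with h1 | h1 <;> rcases hb with h2 | h2 <;> rw [h1, h2] <;> norm_num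

lemma card_le (a : HatP d) : (above P a).card ≤ d + 2 ∧ (below P a).card ≤ d + 2 := by
  constructor <;>
  · refine le_trans (Finset.card_filter_le _ _) ?_
    simp [Finset.card_univ]

lemma ssi_lt_top (i : Fin d) : hatLT P (some (some i)) (hatTop d) :=
  ⟨trivial, by simp [hatTop]⟩

lemma bot_lt_ssi (i : Fin d) : hatLT P (hatBot d) (some (some i)) :=
  ⟨trivial, by simp [hatBot]⟩

lemma zero_mem_Q (hd : 1 ≤ d) : (0 : Fin d → ℝ) ∈ QPoly P := by
  set a0 : HatP d := some (some ⟨0, hd⟩) with ha0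
  obtain ⟨n, hn0, -, hn⟩ := chain_up P (above P a0).card a0 le_rfl (ssi_lt_top P _)
  obtain ⟨m, hm0, -, hm⟩ := chain_down P (below P a0).card a0 le_rfl (bot_lt_ssi P _)
  have hnn : (n : ℝ) ≠ 0 := Nat.cast_ne_zero.mpr (by omega)
  have hmn : (m : ℝ) ≠ 0 := Nat.cast_ne_zero.mpr (by omega)
  have hnm : (n : ℝ) + (m : ℝ) ≠ 0 := by positivity
  have key : (0 : Fin d → ℝ) =
      ((n:ℝ)/((n:ℝ)+(m:ℝ))) • ((n:ℝ)⁻¹ • chi a0) +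
      ((m:ℝ)/((n:ℝ)+(m:ℝ))) • ((m:ℝ)⁻¹ • (-chi a0)) := by
    match_scalars
    field_simp
    try ring
  rw [key]
  exact convexQ P hn hm (by positivity) (by positivity) (by field_simp)

lemma eps_mem_Q (hd : 1 ≤ d) (i : Fin d) :
    ((d:ℝ)+2)⁻¹ • chi (some (some i) : HatP d) ∈ QPoly P ∧
    ((d:ℝ)+2)⁻¹ • (-chi (some (some i) : HatP d)) ∈ QPoly P := by
  have hd2 : (0:ℝ) < (d:ℝ) + 2 := by positivity
  constructor
  · obtain ⟨n, hn0, hnle, hn⟩ :=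
      chain_up P (above P (some (some i))).card (some (some i)) le_rfl (ssi_lt_top P i)
    have hcard := (card_le P (some (some i))).1
    have hnd : (n : ℝ) ≤ (d:ℝ) + 2 := by exact_mod_cast le_trans hnle hcard
    have hnn : (n : ℝ) ≠ 0 := Nat.cast_ne_zero.mpr (by omega)
    have key : ((d:ℝ)+2)⁻¹ • chi (some (some i) : HatP d) =
        ((n:ℝ) * ((d:ℝ)+2)⁻¹) • ((n:ℝ)⁻¹ • chi (some (some i) : HatP d)) +
        (1 - (n:ℝ) * ((d:ℝ)+2)⁻¹) • (0 : Fin d → ℝ) := by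
      match_scalars
      field_simp
      try ring
    rw [key]
    refine convexQ P hn (zero_mem_Q P hd) (by positivity) ?_ (by ring)
    have : (n:ℝ) * ((d:ℝ)+2)⁻¹ ≤ 1 := by
      rw [← le_div_iff₀ (by positivity)] at *
      simpa [one_div, inv_inv] using hnd
    linarith
  · obtain ⟨n, hn0, hnle, hn⟩ :=
      chain_down P (below P (some (some i))).card (some (some i)) le_rfl (bot_lt_ssi P i)
    have hcard := (card_le P (some (some i))).2
    have hnd : (n : ℝ) ≤ (d:ℝ) + 2 := by exact_mod_cast le_trans hnle hcard
    have hnn : (n : ℝ) ≠ 0 := Nat.cast_ne_zero.mpr (by omega)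
    have key : ((d:ℝ)+2)⁻¹ • (-chi (some (some i) : HatP d)) =
        ((n:ℝ) * ((d:ℝ)+2)⁻¹) • ((n:ℝ)⁻¹ • (-chi (some (some i) : HatP d))) +
        (1 - (n:ℝ) * ((d:ℝ)+2)⁻¹) • (0 : Fin d → ℝ) := by
      match_scalars
      field_simp
      try ring
    rw [key]
    refine convexQ P hn (zero_mem_Q P hd) (by positivity) ?_ (by ring)
    have : (n:ℝ) * ((d:ℝ)+2)⁻¹ ≤ 1 := by
      rw [← le_div_iff₀ (by positivity)] at *
      simpa [one_div, inv_inv] using hnd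
    linarith

lemma ball_sub_Q' (hd : 1 ≤ d) (ε : ℝ) (hεpos : 0 < ε)
    (hpm : ∀ i : Fin d, ε • chi (some (some i) : HatP d) ∈ QPoly P ∧
      ε • (-chi (some (some i) : HatP d)) ∈ QPoly P) :
    Metric.ball (0 : Fin d → ℝ) (ε / (d:ℝ)) ⊆ QPoly P := by
  have hdn : (d:ℝ) ≠ 0 := Nat.cast_ne_zero.mpr (by omega)
  intro x hx
  rw [Metric.mem_ball, dist_zero_right] at hx
  have hxi : ∀ i, |(d:ℝ) * x i| ≤ ε := by
    intro i
    have h1 : ‖x i‖ ≤ ‖x‖ := norm_le_pi_norm x i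
    have h2 : |x i| < ε / d := lt_of_le_of_lt (by rwa [Real.norm_eq_abs] at h1) hx
    rw [abs_mul]
    have hd0 : (0:ℝ) < (d:ℝ) := by positivity
    calc |(d:ℝ)| * |x i| ≤ (d:ℝ) * (ε / d) := by
          rw [abs_of_nonneg hd0.le]
          exact mul_le_mul_of_nonneg_left h2.le hd0.le
      _ = ε := by field_simp
  have hz : ∀ i : Fin d, ((d:ℝ) * x i) • chi (some (some i) : HatP d) ∈ QPoly P := by
    intro i
    obtain ⟨hp, hm⟩ := hpm i
    set t : ℝ := ((d:ℝ) * x i + ε) / (2 * ε) with ht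
    have h1 : 0 ≤ t := by
      apply div_nonneg _ (by positivity)
      have := (abs_le.mp (hxi i)).1
      linarith
    have h2 : 0 ≤ 1 - t := by
      have := (abs_le.mp (hxi i)).2
      rw [ht]
      rw [sub_nonneg, div_le_one (by positivity)]
      linarith
    have key : ((d:ℝ) * x i) • chi (some (some i) : HatP d) =
        t • (ε • chi (some (some i) : HatP d)) +
        (1 - t) • (ε • (-chi (some (some i) : HatP d))) := by
      match_scalars
      rw [ht]
      field_simp
      try ring
    rw [key]
    exact convexQ P hp hm h1 h2 (by ring)
  have hsum : x = ∑ i : Fin d, (d:ℝ)⁻¹ • (((d:ℝ) * x i) • chi (some (some i) : HatP d)) := by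
    funext k
    simp only [Finset.sum_apply, Pi.smul_apply, smul_eq_mul, chi]
    rw [Finset.sum_eq_single k]
    · field_simp
      simp
    · intro b _ hb
      simp [Ne.symm hb]
    · intro h
      simp at h
  rw [hsum]
  apply (convexQ P).sum_mem
  · intro i _
    positivity
  · simp only [Finset.sum_const, Finset.card_univ, Fintype.card_fin, nsmul_eq_mul]
    field_simp
  · intro i _
    exact hz i

lemma ball_sub_Q (hd : 1 ≤ d) :
    Metric.ball (0 : Fin d → ℝ) (((d:ℝ)+2)⁻¹ / (d:ℝ)) ⊆ QPoly P :=
  ball_sub_Q' P hd _ (by positivity) (eps_mem_Q P hd)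

end final


/-- `Q_P` is a Fano polytope: it has dimension `d` and the origin is
the unique integer point belonging to its interior. -/
theorem stmt1 (d : ℕ) (hd : 1 ≤ d) (P : PartialOrder (Fin d)) :
    affineSpan ℝ (QPoly P) = ⊤ ∧
    (0 : Fin d → ℝ) ∈ interior (QPoly P) ∧
    (∀ x ∈ interior (QPoly P), IsIntegralPt x → x = 0) := by
  have hdn : (d:ℝ) ≠ 0 := Nat.cast_ne_zero.mpr (by omega)
  have hrpos : 0 < ((d:ℝ)+2)⁻¹ / (d:ℝ) := by positivity
  have hint : (0 : Fin d → ℝ) ∈ interior (QPoly P) :=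
    mem_interior.mpr ⟨_, ball_sub_Q P hd, Metric.isOpen_ball, Metric.mem_ball_self hrpos⟩
  refine ⟨?_, hint, ?_⟩
  · exact (convexQ P).interior_nonempty_iff_affineSpan_eq_top.mp ⟨0, hint⟩
  · intro x hx hxint
    haveI : Nonempty (Fin d) := ⟨⟨0, hd⟩⟩
    haveI : Nontrivial (Fin d → ℝ) := inferInstance
    have h1 : x ∈ Metric.ball (0 : Fin d → ℝ) 1 := by
      rw [← interior_closedBall (0 : Fin d → ℝ) one_ne_zero]
      exact interior_mono (Q_sub_ball P) hx
    rw [Metric.mem_ball, dist_zero_right] at h1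
    funext k
    obtain ⟨z, hz⟩ := hxint k
    have h2 : |(z:ℝ)| < 1 := by
      calc |(z:ℝ)| = ‖x k‖ := by rw [hz, Real.norm_eq_abs]
        _ ≤ ‖x‖ := norm_le_pi_norm x k
        _ < 1 := h1
    have h3 : |z| < 1 := by exact_mod_cast (by rwa [← Int.cast_abs] at h2 : ((|z|:ℤ):ℝ) < 1)
    have : z = 0 := by
      have := abs_lt.mp h3
      omega
    simp [hz, this]
end

section
/- The set of vertices (extreme points) of the polytope Q_P is exactly {ρ(e) : e an edge of P̂}. -/
open scoped Classical

/-- Auxiliary linear functional given a coefficient vector. -/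
noncomputable def lfun {d : ℕ} (c : Fin d → ℝ) : (Fin d → ℝ) →ₗ[ℝ] ℝ where
  toFun x := ∑ k, c k * x k
  map_add' x y := by simp [mul_add, Finset.sum_add_distrib]
  map_smul' r x := by simp [Finset.mul_sum, mul_left_comm]

/-- Value of `lfun c` at `chi y`. -/
def lval {d : ℕ} (c : Fin d → ℝ) : HatP d → ℝ
  | some (some i) => c i
  | _ => 0

lemma lfun_chi {d : ℕ} (c : Fin d → ℝ) (y : HatP d) : lfun c (chi y) = lval c y := by
  match y with
  | none => simp [lfun, chi, lval]
  | some none => simp [lfun, chi, lval]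
  | some (some i) =>
      simp only [lfun, chi, lval, LinearMap.coe_mk, AddHom.coe_mk]
      rw [Finset.sum_congr rfl (fun k _ => by rw [mul_ite, mul_one, mul_zero])]
      simp

lemma lfun_rho {d : ℕ} (c : Fin d → ℝ) (a b : HatP d) :
    lfun c (rho a b) = lval c a - lval c b := by
  rw [rho, map_sub, lfun_chi, lfun_chi]

/-- If a linear functional strictly separates `v` from the rest of `s`,
then `v` is an extreme point of the convex hull of `s`. -/
lemma mem_extreme_of_sep {d : ℕ} (s : Set (Fin d → ℝ)) (v : Fin d → ℝ)
    (hv : v ∈ s) (ℓ : (Fin d → ℝ) →ₗ[ℝ] ℝ)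
    (hsep : ∀ w ∈ s, w = v ∨ ℓ w < ℓ v) :
    v ∈ Set.extremePoints ℝ (convexHull ℝ s) := by
  have hhalf : convexHull ℝ s ⊆ {x | ℓ x ≤ ℓ v} := by
    apply convexHull_min
    · intro w hw
      rcases hsep w hw with h | h
      · simp [h]
      · exact le_of_lt h
    · exact convex_halfSpace_le ℓ.isLinear (ℓ v)
  have key : ∀ x ∈ convexHull ℝ s, ℓ x = ℓ v → x = v := by
    intro x hx hlx
    rw [convexHull_eq] at hx
    obtain ⟨ι, t, w, z, hw0, hw1, hz, hcm⟩ := hx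
    rw [Finset.centerMass_eq_of_sum_1 _ _ hw1] at hcm
    have hterm : ∀ i ∈ t, w i * (ℓ v - ℓ (z i)) = 0 := by
      have hlxsum : ℓ x = ∑ i ∈ t, w i * ℓ (z i) := by
        rw [← hcm]; simp [map_sum, map_smul, smul_eq_mul]
      have hsum : ∑ i ∈ t, w i * (ℓ v - ℓ (z i)) = 0 := by
        have h1 : ∑ i ∈ t, w i * (ℓ v - ℓ (z i))
            = (∑ i ∈ t, w i) * ℓ v - ∑ i ∈ t, w i * ℓ (z i) := by
          rw [Finset.sum_mul, ← Finset.sum_sub_distrib]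
          exact Finset.sum_congr rfl (fun i _ => by ring)
        rw [h1, hw1, ← hlxsum, hlx]; ring
      refine (Finset.sum_eq_zero_iff_of_nonneg ?_).1 hsum
      intro i hi
      have h0 := hw0 i hi
      have hle : ℓ (z i) ≤ ℓ v := by
        rcases hsep (z i) (hz i hi) with h | h
        · rw [h]
        · exact h.le
      have : 0 ≤ ℓ v - ℓ (z i) := by linarith
      positivity
    have hzv : ∀ i ∈ t, w i ≠ 0 → z i = v := by
      intro i hi hwi
      have h1 := hterm i hi
      have h2 : ℓ (z i) = ℓ v := by
        rcases mul_eq_zero.1 h1 with h | h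
        · exact absurd h hwi
        · linarith
      rcases hsep (z i) (hz i hi) with h | h
      · exact h
      · linarith
    calc x = ∑ i ∈ t, w i • z i := hcm.symm
      _ = ∑ i ∈ t, w i • v := Finset.sum_congr rfl (fun i hi => by
          by_cases hwi : w i = 0
          · simp [hwi]
          · rw [hzv i hi hwi])
      _ = v := by rw [← Finset.sum_smul, hw1, one_smul]
  refine ⟨subset_convexHull ℝ s hv, ?_⟩
  intro x₁ hx₁ x₂ hx₂ hseg
  obtain ⟨a, b, ha, hb, hab, hx⟩ := hseg
  have h1 : ℓ x₁ ≤ ℓ v := hhalf hx₁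
  have h2 : ℓ x₂ ≤ ℓ v := hhalf hx₂
  have hc : a * ℓ x₁ + b * ℓ x₂ = ℓ v := by
    rw [← hx]; simp [map_add, map_smul, smul_eq_mul]
  have he1 : ℓ x₁ = ℓ v := by
    rcases lt_or_eq_of_le h1 with hlt | h
    · exfalso
      have hsum : a * ℓ v + b * ℓ v = ℓ v := by rw [← add_mul, hab, one_mul]
      nlinarith [mul_lt_mul_of_pos_left hlt ha, mul_le_mul_of_nonneg_left h2 hb.le]
    · exact h
  have he2 : ℓ x₂ = ℓ v := by
    rcases lt_or_eq_of_le h2 with hlt | h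
    · exfalso
      have hsum : a * ℓ v + b * ℓ v = ℓ v := by rw [← add_mul, hab, one_mul]
      nlinarith [mul_lt_mul_of_pos_left hlt hb, mul_le_mul_of_nonneg_left h1 ha.le]
    · exact h
  exact key x₁ hx₁ he1

/-- With `d ≥ 1`, `1̂` does not cover `0̂`. -/
lemma not_cover_bot_top {d : ℕ} (hd : 1 ≤ d) (P : PartialOrder (Fin d)) :
    ¬ IsCover P none (some none) := by
  rintro ⟨-, h⟩
  exact h (some (some ⟨0, hd⟩)) ⟨⟨trivial, by simp [hatLE]⟩, ⟨trivial, by simp⟩⟩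

/-- Shapes of covering pairs. -/
lemma cover_shape {d : ℕ} (hd : 1 ≤ d) {P : PartialOrder (Fin d)} {a b : HatP d}
    (h : IsCover P a b) :
    (∃ j : Fin d, a = none ∧ b = some (some j)) ∨
    (∃ i : Fin d, a = some (some i) ∧ b = some none) ∨
    (∃ i j : Fin d, i ≠ j ∧ a = some (some i) ∧ b = some (some j)) := by
  have hle := h.1.1
  have hne := h.1.2
  match a, b with
  | none, none => exact absurd rfl hne
  | none, some none => exact absurd h (not_cover_bot_top hd P)
  | none, some (some j) => exact Or.inl ⟨j, rfl, rfl⟩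
  | some none, none => exact absurd hle (by simp [hatLE])
  | some none, some none => exact absurd rfl hne
  | some none, some (some _) => exact absurd hle (by simp [hatLE])
  | some (some _), none => exact absurd hle (by simp [hatLE])
  | some (some i), some none => exact Or.inr (Or.inl ⟨i, rfl, rfl⟩)
  | some (some i), some (some j) =>
      exact Or.inr (Or.inr ⟨i, j, fun hij => hne (by rw [hij]), rfl, rfl⟩)

/-- the set of vertices (extreme points) of `Q_P` is exactly
`{ρ(e) : e an edge of P̂}`. -/
theorem stmt3 (d : ℕ) (hd : 1 ≤ d) (P : PartialOrder (Fin d)) :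
    Set.extremePoints ℝ (QPoly P) = edgeVecs P := by
  apply Set.Subset.antisymm
  · exact extremePoints_convexHull_subset
  · rintro v ⟨a, b, hcov, rfl⟩
    rcases cover_shape hd hcov with ⟨j, rfl, rfl⟩ | ⟨i, rfl, rfl⟩ | ⟨i, j, hij, rfl, rfl⟩
    · -- v = -e_j, from edge (0̂, y_j)
      set c : Fin d → ℝ := fun k => if k = j then (-3)/2 else (-1)/2 with hc
      refine mem_extreme_of_sep (edgeVecs P) _ ⟨_, _, hcov, rfl⟩ (lfun c) ?_
      rintro w ⟨a', b', hcov', rfl⟩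
      rw [lfun_rho, lfun_rho]
      rcases cover_shape hd hcov' with ⟨l, rfl, rfl⟩ | ⟨k, rfl, rfl⟩ | ⟨k, l, hkl, rfl, rfl⟩
      · by_cases hlj : l = j
        · subst hlj; left; rfl
        · right; simp only [lval, hc]; split_ifs <;> norm_num
      · right; simp only [lval, hc]; split_ifs <;> norm_num
      · right; simp only [lval, hc]; split_ifs <;> norm_num
    · -- v = e_i, from edge (y_i, 1̂)
      set c : Fin d → ℝ := fun k => if k = i then 3/2 else 1/2 with hc
      refine mem_extreme_of_sep (edgeVecs P) _ ⟨_, _, hcov, rfl⟩ (lfun c) ?_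
      rintro w ⟨a', b', hcov', rfl⟩
      rw [lfun_rho, lfun_rho]
      rcases cover_shape hd hcov' with ⟨l, rfl, rfl⟩ | ⟨k, rfl, rfl⟩ | ⟨k, l, hkl, rfl, rfl⟩
      · right; simp only [lval, hc]; split_ifs <;> norm_num
      · by_cases hki : k = i
        · subst hki; left; rfl
        · right; simp only [lval, hc]; split_ifs <;> norm_num
      · right; simp only [lval, hc]; split_ifs <;> norm_num
    · -- v = e_i - e_j, from edge (y_i, y_j)
      set c : Fin d → ℝ :=
        fun k => (if k = i then 1 else 0) - (if k = j then 1 else 0) with hc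
      have hci : c i = 1 := by simp [hc, hij]
      have hcj : c j = -1 := by simp [hc, Ne.symm hij]
      have hbd : ∀ k, -1 ≤ c k ∧ c k ≤ 1 := by
        intro k; constructor <;> (simp only [hc]; split_ifs <;> norm_num)
      have hnoti : ∀ k, k ≠ i → c k ≤ 0 := by
        intro k hk; simp only [hc]; split_ifs <;> first | exact absurd ‹k = i› hk | norm_num
      have hnotj : ∀ k, k ≠ j → 0 ≤ c k := by
        intro k hk; simp only [hc]; split_ifs <;> first | exact absurd ‹k = j› hk | norm_num
      refine mem_extreme_of_sep (edgeVecs P) _ ⟨_, _, hcov, rfl⟩ (lfun c) ?_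
      rintro w ⟨a', b', hcov', rfl⟩
      rw [lfun_rho, lfun_rho]
      rcases cover_shape hd hcov' with ⟨l, rfl, rfl⟩ | ⟨k, rfl, rfl⟩ | ⟨k, l, hkl, rfl, rfl⟩
      · right; simp only [lval]
        have := (hbd l).1; linarith
      · right; simp only [lval]
        have := (hbd k).2; linarith
      · by_cases hki : k = i <;> by_cases hlj : l = j
        · subst hki; subst hlj; left; rfl
        · right; simp only [lval]
          have h1 := (hbd k).2
          have h2 := hnotj l hlj
          linarith
        · right; simp only [lval]
          have h1 := hnoti k hki
          have h2 := (hbd l).1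
          linarith
        · right; simp only [lval]
          have h1 := hnoti k hki
          have h2 := hnotj l hlj
          linarith
end

section
/- The Fano polytope Q_P is Gorenstein: its dual polytope Q_P^∨ = {x ∈ ℝ^d : ⟨x, y⟩ ≤ 1 for all y ∈ Q_P} is an integral polytope; equivalently, the supporting hyperplane of each facet of Q_P has an equation of the form a_1 x_1 + \cdots + a_d x_d = 1 with all a_i ∈ ℤ. -/
open scoped Classical

/-- The dual polytope `Q^∨ = {x : ⟨x, y⟩ ≤ 1 for all y ∈ Q}`. -/
def dualPoly {d : ℕ} (Q : Set (Fin d → ℝ)) : Set (Fin d → ℝ) :=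
  {x | ∀ y ∈ Q, (∑ k, x k * y k) ≤ 1}

lemma sum_mul_chi {d : ℕ} (u : Fin d → ℝ) (a : HatP d) :
    ∑ k, u k * chi a k = match a with
      | some (some i) => u i
      | _ => 0 := by
  match a with
  | none => simp [chi]
  | some none => simp [chi]
  | some (some i) => simp [chi, mul_ite, Finset.sum_ite_eq']

lemma sum_mul_rho {d : ℕ} (u : Fin d → ℝ) (a b : HatP d) :
    ∑ k, u k * rho a b k = (∑ k, u k * chi a k) - (∑ k, u k * chi b k) := by
  simp [rho, Pi.sub_apply, mul_sub, Finset.sum_sub_distrib]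

lemma mem_dualPoly_hull_iff {d : ℕ} (S : Set (Fin d → ℝ)) (x : Fin d → ℝ) :
    x ∈ dualPoly (convexHull ℝ S) ↔ ∀ v ∈ S, (∑ k, x k * v k) ≤ 1 := by
  constructor
  · intro hx v hv
    exact hx v (subset_convexHull ℝ S hv)
  · intro h y hy
    have hconv : Convex ℝ {y : Fin d → ℝ | (∑ k, x k * y k) ≤ 1} := by
      apply convex_halfSpace_le (𝕜 := ℝ) (f := fun y : Fin d → ℝ => ∑ k, x k * y k)
      constructor
      · intro y z; simp [Pi.add_apply, mul_add, Finset.sum_add_distrib]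
      · intro c y
        simp only [Pi.smul_apply, smul_eq_mul, Finset.mul_sum]
        exact Finset.sum_congr rfl fun k _ => by ring
    exact convexHull_min h hconv hy

lemma edgeVecs_finite {d : ℕ} (P : PartialOrder (Fin d)) : (edgeVecs P).Finite := by
  apply Set.Finite.subset (Set.finite_range (fun p : HatP d × HatP d => rho p.1 p.2))
  rintro v ⟨a, b, _, rfl⟩
  exact ⟨(a, b), rfl⟩

/-- `Q_P` is Gorenstein: its dual polytope is integral, i.e. every
vertex of the dual polytope has integer coordinates. -/
theorem stmt5 (d : ℕ) (hd : 1 ≤ d) (P : PartialOrder (Fin d)) :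
    ∀ x ∈ Set.extremePoints ℝ (dualPoly (QPoly P)), IsIntegralPt x := by
  classical
  intro x hx
  by_contra hnot
  rw [IsIntegralPt] at hnot
  push_neg at hnot
  obtain ⟨k₀, hk₀⟩ := hnot
  -- the "non-integral indicator" perturbation direction
  set I : ℝ → Prop := fun r => ∃ z : ℤ, r = (z : ℝ) with hIdef
  set w : Fin d → ℝ := fun k => if I (x k) then 0 else 1 with hwdef
  have hIk₀ : ¬ I (x k₀) := by rintro ⟨z, hz⟩; exact hk₀ z hz
  have hwk₀ : w k₀ = 1 := by simp only [hwdef, if_neg hIk₀]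
  -- evaluation of sums against `chi`
  have hchiW : ∀ a : HatP d,
      (∑ k, w k * chi a k) = if I (∑ k, x k * chi a k) then 0 else 1 := by
    intro a
    match a with
    | none =>
      have h0 : I 0 := ⟨0, by simp⟩
      simp [sum_mul_chi, h0]
    | some none =>
      have h0 : I 0 := ⟨0, by simp⟩
      simp [sum_mul_chi, h0]
    | some (some i) => simp only [sum_mul_chi, hwdef]
  have hW01 : ∀ a : HatP d, (∑ k, w k * chi a k) = 0 ∨ (∑ k, w k * chi a k) = 1 := by
    intro a; rw [hchiW]; split <;> simp
  -- membership and extremality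
  rw [mem_extremePoints] at hx
  obtain ⟨hxK, hext⟩ := hx
  have hxd : ∀ v ∈ edgeVecs P, (∑ k, x k * v k) ≤ 1 :=
    (mem_dualPoly_hull_iff (edgeVecs P) x).1 hxK
  -- tight edge vectors are orthogonal to w
  have hB : ∀ v ∈ edgeVecs P, (∑ k, x k * v k) = 1 → (∑ k, w k * v k) = 0 := by
    rintro v ⟨a, b, _, rfl⟩ h1
    rw [sum_mul_rho] at h1 ⊢
    have hIab : I (∑ k, x k * chi a k) ↔ I (∑ k, x k * chi b k) := by
      constructor
      · rintro ⟨z, hz⟩; exact ⟨z - 1, by push_cast; linarith⟩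
      · rintro ⟨z, hz⟩; exact ⟨z + 1, by push_cast; linarith⟩
    rw [hchiW a, hchiW b]
    by_cases h : I (∑ k, x k * chi a k)
    · rw [if_pos h, if_pos (hIab.1 h)]; ring
    · rw [if_neg h, if_neg (fun h' => h (hIab.2 h'))]; ring
  -- uniform bound on |⟨w, v⟩|
  have hA : ∀ v ∈ edgeVecs P, |∑ k, w k * v k| ≤ 2 := by
    rintro v ⟨a, b, _, rfl⟩
    rw [sum_mul_rho]
    rcases hW01 a with h1 | h1 <;> rcases hW01 b with h2 | h2 <;>
      rw [h1, h2] <;> norm_num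
  -- set up the slack δ
  set E : Finset (Fin d → ℝ) := (edgeVecs_finite P).toFinset with hEdef
  set T : Finset (Fin d → ℝ) := E.filter (fun v => (∑ k, w k * v k) ≠ 0) with hTdef
  set F : Finset ℝ := insert (1 : ℝ) (T.image fun v => 1 - ∑ k, x k * v k) with hFdef
  have hFne : F.Nonempty := ⟨1, Finset.mem_insert_self _ _⟩
  set δ : ℝ := F.min' hFne with hδdef
  have hδpos : 0 < δ := by
    have hmemF : δ ∈ F := F.min'_mem hFne
    rcases Finset.mem_insert.1 hmemF with h | h
    · rw [h]; norm_num
    · obtain ⟨v, hvT, hv⟩ := Finset.mem_image.1 h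
      rw [hTdef, Finset.mem_filter] at hvT
      obtain ⟨hvE, hvw⟩ := hvT
      have hvE' : v ∈ edgeVecs P := (Set.Finite.mem_toFinset _).1 hvE
      have hle : (∑ k, x k * v k) ≤ 1 := hxd v hvE'
      have hne : (∑ k, x k * v k) ≠ 1 := fun h1 => hvw (hB v hvE' h1)
      rw [← hv]; cases lt_or_eq_of_le hle with
      | inl h => linarith
      | inr h => exact absurd h hne
  have hδle : ∀ v ∈ T, δ ≤ 1 - ∑ k, x k * v k := by
    intro v hv
    apply Finset.min'_le
    rw [hFdef]
    exact Finset.mem_insert_of_mem (Finset.mem_image_of_mem _ hv)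
  set ε : ℝ := δ / 2 with hεdef
  have hεpos : 0 < ε := by positivity
  -- the two perturbed points lie in the dual
  have hmem : ∀ s : ℝ, |s| ≤ ε → (x + s • w) ∈ dualPoly (QPoly P) := by
    intro s hs
    rw [QPoly, mem_dualPoly_hull_iff]
    intro v hv
    have hsum : (∑ k, (x + s • w) k * v k)
        = (∑ k, x k * v k) + s * (∑ k, w k * v k) := by
      rw [Finset.mul_sum, ← Finset.sum_add_distrib]
      exact Finset.sum_congr rfl fun k _ => by
        simp only [Pi.add_apply, Pi.smul_apply, smul_eq_mul]; ring
    rw [hsum]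
    by_cases hsv : (∑ k, w k * v k) = 0
    · rw [hsv]; simpa using hxd v hv
    · have hvT : v ∈ T := by
        rw [hTdef, Finset.mem_filter]
        exact ⟨(Set.Finite.mem_toFinset _).2 hv, hsv⟩
      have h1 : δ ≤ 1 - ∑ k, x k * v k := hδle v hvT
      have h2 : |s * (∑ k, w k * v k)| ≤ ε * 2 := by
        rw [abs_mul]
        exact mul_le_mul hs (hA v hv) (abs_nonneg _) (le_of_lt hεpos)
      have h3 : s * (∑ k, w k * v k) ≤ δ := by
        have := le_abs_self (s * (∑ k, w k * v k))
        rw [hεdef] at h2; linarith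
      linarith
  have hm1 : (x + (-ε) • w) ∈ dualPoly (QPoly P) := hmem (-ε) (by rw [abs_neg, abs_of_pos hεpos])
  have hm2 : (x + ε • w) ∈ dualPoly (QPoly P) := hmem ε (by rw [abs_of_pos hεpos])
  have hseg : x ∈ openSegment ℝ (x + (-ε) • w) (x + ε • w) := by
    refine ⟨1/2, 1/2, by norm_num, by norm_num, by norm_num, ?_⟩
    funext k
    simp only [Pi.add_apply, Pi.smul_apply, smul_eq_mul, Pi.neg_apply, neg_mul]
    ring
  have heq := (hext _ hm1 _ hm2 hseg).1
  have := congrFun heq k₀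
  simp only [Pi.add_apply, Pi.smul_apply, smul_eq_mul, hwk₀, mul_one] at this
  linarith
end
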